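/- arXiv:1909.08605 — 5 statements merged into one kernel-verified Lean document; each statement's English description precedes it below -/
import Mathlib

section
/- For any fixed residual r ∈ ℝ, parameters c̄ > 0 and μ > 0, the function w ↦ w·r² + μc̄²(√w − 1)² on [0,1] attains its unique global minimum at w* = (μc̄²/(r² + μc̄²))². -/
/-!
Writing `t = √w`, the cost is the quadratic `a t² + b (t - 1)²` with `a = r²`, `b = μ c̄²`.
Completing the square, it equals `(a + b) (t - s)² + a b / (a + b)` with `s = b / (a + b) ∈ (0, 1]`,
so it is minimised exactly at `t = s`, i.e. at `w = s²`.
-/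

open Real

section
variable {a b : ℝ}

theorem mul_sq_add_mul_sub_one_sq_eq (hab : a + b ≠ 0) (t : ℝ) :
    a * t ^ 2 + b * (t - 1) ^ 2 = (a + b) * (t - b / (a + b)) ^ 2 + a * b / (a + b) := by
  field_simp
  ring

theorem div_add_mem_Ioc (ha : 0 ≤ a) (hb : 0 < b) : b / (a + b) ∈ Set.Ioc 0 1 :=
  ⟨by positivity, div_le_one_of_le₀ (by linarith) (by positivity)⟩

theorem weight_cost_sub_weight_cost_opt (ha : 0 ≤ a) (hb : 0 < b) {w : ℝ} (hw : 0 ≤ w) :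
    (w * a + b * (√w - 1) ^ 2) - ((b / (a + b)) ^ 2 * a + b * (√((b / (a + b)) ^ 2) - 1) ^ 2) =
      (a + b) * (√w - b / (a + b)) ^ 2 := by
  have hab : a + b ≠ 0 := by positivity
  rw [sqrt_sq (div_add_mem_Ioc ha hb).1.le, ← sq_sqrt hw, sqrt_sq (sqrt_nonneg w), mul_comm _ a,
    mul_comm _ a, mul_sq_add_mul_sub_one_sq_eq hab, mul_sq_add_mul_sub_one_sq_eq hab]
  ring

end

/-- GNC-GM weight update: the function `w ↦ w r² + μ c̄² (√w − 1)²` on `[0,1]`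
attains its unique global minimum at `w* = (μ c̄²/(r² + μ c̄²))²`. -/
theorem gnc_gm_weight_update (c μ r : ℝ) (hc : 0 < c) (hμ : 0 < μ) :
    let F : ℝ → ℝ := fun w => w * r ^ 2 + μ * c ^ 2 * (Real.sqrt w - 1) ^ 2
    let wstar : ℝ := (μ * c ^ 2 / (r ^ 2 + μ * c ^ 2)) ^ 2
    wstar ∈ Set.Icc (0 : ℝ) 1 ∧
    (∀ w ∈ Set.Icc (0 : ℝ) 1, F wstar ≤ F w) ∧
    (∀ w ∈ Set.Icc (0 : ℝ) 1, w ≠ wstar → F wstar < F w) := by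
  intro F wstar
  have hb : 0 < μ * c ^ 2 := by positivity
  set s := μ * c ^ 2 / (r ^ 2 + μ * c ^ 2)
  obtain ⟨hs0, hs1⟩ : s ∈ Set.Ioc 0 1 := div_add_mem_Ioc (sq_nonneg r) hb
  have hgap (w : ℝ) (hw : w ∈ Set.Icc (0 : ℝ) 1) :
      F w - F wstar = (r ^ 2 + μ * c ^ 2) * (√w - s) ^ 2 :=
    weight_cost_sub_weight_cost_opt (sq_nonneg r) hb hw.1
  refine ⟨⟨by positivity, pow_le_one₀ hs0.le hs1⟩, fun w hw => ?_, fun w hw hne => ?_⟩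
  · nlinarith [hgap w hw, sq_nonneg (√w - s)]
  · have hsqrt : √w ≠ s := fun h => hne (by rw [← sq_sqrt hw.1, h])
    have : 0 < (r ^ 2 + μ * c ^ 2) * (√w - s) ^ 2 := by
      have := sub_ne_zero.mpr hsqrt
      positivity
    linarith [hgap w hw]
end

section
/- For fixed residual r ≥ 0, parameters c̄ > 0 and μ > 0, consider F(w) = w·r² + μ(1−w)c̄²/(μ + w) on [0,1]. Then: (i) if r² ≥ ((μ+1)/μ)c̄², the minimum of F is attained at w = 0; (ii) if r² ≤ (μ/(μ+1))c̄², the minimum is attained at w = 1; (iii) if (μ/(μ+1))c̄² ≤ r² ≤ ((μ+1)/μ)c̄² and r > 0, the minimum is attained at w* = (c̄/r)·√(μ(μ+1)) − μ, which lies in [0,1]. -/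
/-!
Substituting `t = μ + w ∈ [μ, μ + 1]` turns the objective into `h t = a t + K / t` with
`a = r²`, `K = μ(μ+1)c̄²`, up to an additive constant. The identity
`h t - h s = (t - s)(a s t - K)/(s t)` shows that `h` increases while `a s t ≥ K` and decreases
while `a s t ≤ K`, which settles the two boundary regimes. Otherwise write `a = p²`, `K = q²` with
`p = r`, `q = c̄ √(μ(μ+1))`: AM-GM `p² t + q²/t ≥ 2pq`, with equality at `t = q/p`, puts the
minimum at `t = c̄ √(μ(μ+1)) / r`, and the two bounds on `r²` say exactly that this `t` lies in
`[μ, μ + 1]`.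
-/

open Set

section AddDiv

variable {a K s t : ℝ}

theorem mul_add_div_sub_mul_add_div (a K : ℝ) (hs : s ≠ 0) (ht : t ≠ 0) :
    (a * t + K / t) - (a * s + K / s) = (t - s) * (a * s * t - K) / (s * t) := by
  field_simp
  ring

theorem mul_add_div_le_of_le (hs : 0 < s) (hst : s ≤ t) (hK : K ≤ a * s * t) :
    a * s + K / s ≤ a * t + K / t := by
  have ht : 0 < t := hs.trans_le hst
  have := mul_add_div_sub_mul_add_div a K hs.ne' ht.ne'
  have : 0 ≤ (t - s) * (a * s * t - K) / (s * t) := by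
    apply div_nonneg (mul_nonneg _ _) (mul_pos hs ht).le <;> linarith
  linarith

theorem mul_add_div_le_of_ge (ht : 0 < t) (hts : t ≤ s) (hK : a * s * t ≤ K) :
    a * s + K / s ≤ a * t + K / t := by
  have hs : 0 < s := ht.trans_le hts
  have := mul_add_div_sub_mul_add_div a K hs.ne' ht.ne'
  have : 0 ≤ (t - s) * (a * s * t - K) / (s * t) := by
    apply div_nonneg (mul_nonneg_of_nonpos_of_nonpos _ _) (mul_pos hs ht).le <;> linarith
  linarith

theorem sq_mul_div_add_sq_div_div (p q : ℝ) (hp : p ≠ 0) :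
    p ^ 2 * (q / p) + q ^ 2 / (q / p) = 2 * p * q := by
  rcases eq_or_ne q 0 with rfl | hq
  · simp
  · field_simp
    ring

theorem sq_mul_div_add_sq_div_div_le (p q : ℝ) (hp : p ≠ 0) (ht : 0 < t) :
    p ^ 2 * (q / p) + q ^ 2 / (q / p) ≤ p ^ 2 * t + q ^ 2 / t := by
  have gap : p ^ 2 * t + q ^ 2 / t - 2 * p * q = (p * t - q) ^ 2 / t := by
    field_simp
    ring
  have : 0 ≤ (p * t - q) ^ 2 / t := div_nonneg (sq_nonneg _) ht.le
  rw [sq_mul_div_add_sq_div_div p q hp]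
  linarith

end AddDiv

noncomputable def gncTlsObjective (c μ r w : ℝ) : ℝ :=
  w * r ^ 2 + μ * (1 - w) * c ^ 2 / (μ + w)

section GncTls

variable {c μ r w : ℝ}

theorem gncTlsObjective_eq (hw : μ + w ≠ 0) :
    gncTlsObjective c μ r w
      = r ^ 2 * (μ + w) + μ * (μ + 1) * c ^ 2 / (μ + w) - μ * (c ^ 2 + r ^ 2) := by
  unfold gncTlsObjective
  field_simp
  ring

theorem gncTlsObjective_zero_le (hμ : 0 < μ) (hr : (μ + 1) / μ * c ^ 2 ≤ r ^ 2)
    (hw : w ∈ Icc (0 : ℝ) 1) : gncTlsObjective c μ r 0 ≤ gncTlsObjective c μ r w := by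
  rw [gncTlsObjective_eq (by linarith), gncTlsObjective_eq (by linarith [hw.1]), add_zero]
  gcongr ?_ - _
  refine mul_add_div_le_of_le hμ (by linarith [hw.1]) ?_
  rw [div_mul_eq_mul_div, div_le_iff₀ hμ] at hr
  nlinarith [mul_le_mul_of_nonneg_right hr hμ.le, mul_nonneg (sq_nonneg r) hw.1]

theorem gncTlsObjective_one_le (hμ : 0 < μ) (hr : r ^ 2 ≤ μ / (μ + 1) * c ^ 2)
    (hw : w ∈ Icc (0 : ℝ) 1) : gncTlsObjective c μ r 1 ≤ gncTlsObjective c μ r w := by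
  rw [gncTlsObjective_eq (by linarith), gncTlsObjective_eq (by linarith [hw.1])]
  gcongr ?_ - _
  refine mul_add_div_le_of_ge (by linarith [hw.1]) (by linarith [hw.2]) ?_
  rw [div_mul_eq_mul_div, le_div_iff₀ (by linarith)] at hr
  nlinarith [mul_le_mul_of_nonneg_right hr (by linarith [hw.1] : 0 ≤ μ + w),
    mul_nonneg (by positivity : 0 ≤ μ * c ^ 2) (by linarith [hw.2] : 0 ≤ 1 - w)]

theorem gnc_tls_optimal_weight_mem_Icc (hc : 0 ≤ c) (hμ : 0 < μ) (hr : 0 < r)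
    (hlo : μ / (μ + 1) * c ^ 2 ≤ r ^ 2) (hhi : r ^ 2 ≤ (μ + 1) / μ * c ^ 2) :
    c / r * √(μ * (μ + 1)) - μ ∈ Icc (0 : ℝ) 1 := by
  have hs : √(μ * (μ + 1)) ^ 2 = μ * (μ + 1) := Real.sq_sqrt (by positivity)
  have hcs : 0 ≤ c * √(μ * (μ + 1)) := by positivity
  rw [div_mul_eq_mul_div, div_le_iff₀ (by linarith)] at hlo
  rw [div_mul_eq_mul_div, le_div_iff₀ hμ] at hhi
  have lower : μ * r ≤ c * √(μ * (μ + 1)) := by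
    rw [← pow_le_pow_iff_left₀ (by positivity) hcs two_ne_zero, mul_pow, mul_pow, hs]
    nlinarith
  have upper : c * √(μ * (μ + 1)) ≤ (μ + 1) * r := by
    rw [← pow_le_pow_iff_left₀ hcs (by positivity) two_ne_zero, mul_pow, mul_pow, hs]
    nlinarith
  rw [div_mul_eq_mul_div]
  constructor
  · rw [sub_nonneg, le_div_iff₀ hr]
    linarith
  · rw [sub_le_iff_le_add', div_le_iff₀ hr]
    linarith

theorem gncTlsObjective_optimal_le (hc : 0 < c) (hμ : 0 < μ) (hr : 0 < r)
    (hw : w ∈ Icc (0 : ℝ) 1) :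
    gncTlsObjective c μ r (c / r * √(μ * (μ + 1)) - μ) ≤ gncTlsObjective c μ r w := by
  set q := c * √(μ * (μ + 1))
  have hK : μ * (μ + 1) * c ^ 2 = q ^ 2 := by
    rw [mul_pow, Real.sq_sqrt (by positivity)]
    ring
  have ht : μ + (c / r * √(μ * (μ + 1)) - μ) = q / r := by
    rw [div_mul_eq_mul_div]
    ring
  rw [gncTlsObjective_eq (by rw [ht]; positivity), gncTlsObjective_eq (by linarith [hw.1]), ht, hK]
  gcongr ?_ - _
  exact sq_mul_div_add_sq_div_div_le r q hr.ne' (by linarith [hw.1])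

end GncTls

theorem gnc_tls_weight_update_general (c μ r : ℝ) (hc : 0 < c) (hμ : 0 < μ) :
    let F : ℝ → ℝ := fun w => w * r ^ 2 + μ * (1 - w) * c ^ 2 / (μ + w)
    ((μ + 1) / μ * c ^ 2 ≤ r ^ 2 → ∀ w ∈ Set.Icc (0 : ℝ) 1, F 0 ≤ F w) ∧
    (r ^ 2 ≤ μ / (μ + 1) * c ^ 2 → ∀ w ∈ Set.Icc (0 : ℝ) 1, F 1 ≤ F w) ∧
    (μ / (μ + 1) * c ^ 2 ≤ r ^ 2 → r ^ 2 ≤ (μ + 1) / μ * c ^ 2 → 0 < r →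
      c / r * Real.sqrt (μ * (μ + 1)) - μ ∈ Set.Icc (0 : ℝ) 1 ∧
      ∀ w ∈ Set.Icc (0 : ℝ) 1, F (c / r * Real.sqrt (μ * (μ + 1)) - μ) ≤ F w) := by
  intro F
  exact ⟨fun h _ hw => gncTlsObjective_zero_le hμ h hw,
    fun h _ hw => gncTlsObjective_one_le hμ h hw,
    fun hlo hhi hr => ⟨gnc_tls_optimal_weight_mem_Icc hc.le hμ hr hlo hhi,
      fun _ hw => gncTlsObjective_optimal_le hc hμ hr hw⟩⟩

/-- GNC-TLS weight update: minimizers of `F(w) = w r² + μ(1−w)c̄²/(μ+w)` on `[0,1]`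
in the three regimes of `r²`. -/
theorem gnc_tls_weight_update (c μ r : ℝ) (hc : 0 < c) (hμ : 0 < μ) (hr : 0 ≤ r) :
    let F : ℝ → ℝ := fun w => w * r ^ 2 + μ * (1 - w) * c ^ 2 / (μ + w)
    ((μ + 1) / μ * c ^ 2 ≤ r ^ 2 → ∀ w ∈ Set.Icc (0 : ℝ) 1, F 0 ≤ F w) ∧
    (r ^ 2 ≤ μ / (μ + 1) * c ^ 2 → ∀ w ∈ Set.Icc (0 : ℝ) 1, F 1 ≤ F w) ∧
    (μ / (μ + 1) * c ^ 2 ≤ r ^ 2 → r ^ 2 ≤ (μ + 1) / μ * c ^ 2 → 0 < r →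
      c / r * Real.sqrt (μ * (μ + 1)) - μ ∈ Set.Icc (0 : ℝ) 1 ∧
      ∀ w ∈ Set.Icc (0 : ℝ) 1, F (c / r * Real.sqrt (μ * (μ + 1)) - μ) ≤ F w) :=
  gnc_tls_weight_update_general c μ r hc hμ
end

section
/- For every μ > 0, c̄ > 0 and r ∈ ℝ, the GNC-TLS surrogate ρ_μ(r) satisfies 0 ≤ ρ_μ(r) ≤ min(r², c̄²), and as μ → ∞, ρ_μ(r) converges to the truncated least squares cost ρ(r) = min(r², c̄²) pointwise for r² ≠ c̄². -/
/-!
With `p = √(μ + 1)`, `q = √μ` and `a = |r|`, the middle piece of `ρ_μ` is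
`2pq·ac − q²(a² + c²)`. Since `p² = q² + 1`, we get `a² − ρ_μ = (pa − qc)²` and
`c² − ρ_μ = (pc − qa)²`, whence `ρ_μ ≤ min(r², c²)`; as a quadratic in `qa` the middle piece
has roots `(p ∓ 1)c`, which enclose the middle region `qc ≤ pa`, `qa ≤ pc`, whence `ρ_μ ≥ 0`.
Both thresholds `μ/(μ+1)·c²` and `(μ+1)/μ·c²` tend to `c²`, so for large `μ` every `r` with
`r² ≠ c²` lies in the inner or the outer region, where `ρ_μ` already equals `min(r², c²)`.
-/

open Filter Topology

noncomputable def gncSurrogate (c μ r : ℝ) : ℝ :=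
  if r ^ 2 ≤ μ / (μ + 1) * c ^ 2 then r ^ 2
  else if r ^ 2 ≤ (μ + 1) / μ * c ^ 2 then
    2 * c * |r| * √(μ * (μ + 1)) - μ * (c ^ 2 + r ^ 2)
  else c ^ 2

section Transition

variable {p q a c : ℝ}

lemma transition_le_sq (hpq : p ^ 2 = q ^ 2 + 1) :
    2 * p * q * a * c - q ^ 2 * (a ^ 2 + c ^ 2) ≤ a ^ 2 := by
  nlinarith [sq_nonneg (p * a - q * c)]

lemma transition_nonneg (hpq : p ^ 2 = q ^ 2 + 1) (hp : 0 ≤ p) (hq : 0 ≤ q) (hc : 0 ≤ c)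
    (hac : q * a ≤ p * c) (hca : q * c ≤ p * a) :
    0 ≤ 2 * p * q * a * c - q ^ 2 * (a ^ 2 + c ^ 2) := by
  have hp1 : 1 ≤ p := by nlinarith [sq_nonneg q]
  have hlow : (p - 1) * c ≤ q * a := by nlinarith [mul_le_mul_of_nonneg_left hca hq]
  have hupp : q * a ≤ (p + 1) * c := by nlinarith
  calc (0 : ℝ) ≤ (q * a - (p - 1) * c) * ((p + 1) * c - q * a) :=
        mul_nonneg (by linarith) (by linarith)
    _ = _ := by linear_combination (-c ^ 2) * hpq

end Transition

lemma mul_sq_le_mul_sq_iff {x y r c : ℝ} (hx : 0 ≤ x) (hy : 0 ≤ y) :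
    x * r ^ 2 ≤ y * c ^ 2 ↔ √x * |r| ≤ √y * |c| := by
  rw [← pow_le_pow_iff_left₀ (by positivity : 0 ≤ √x * |r|) (by positivity) two_ne_zero,
    mul_pow, mul_pow, Real.sq_sqrt hx, Real.sq_sqrt hy, sq_abs, sq_abs]

lemma tendsto_add_one_div_self_atTop : Tendsto (fun μ : ℝ => (μ + 1) / μ) atTop (𝓝 1) := by
  have h : Tendsto (fun μ : ℝ => 1 + μ⁻¹) atTop (𝓝 1) := by
    simpa using tendsto_inv_atTop_zero.const_add (1 : ℝ)
  refine h.congr' ?_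
  filter_upwards [eventually_gt_atTop 0] with μ hμ
  rw [add_div, div_self hμ.ne', one_div]

lemma tendsto_div_add_one_atTop : Tendsto (fun μ : ℝ => μ / (μ + 1)) atTop (𝓝 1) := by
  simpa only [inv_div, inv_one] using tendsto_add_one_div_self_atTop.inv₀ one_ne_zero

lemma gncSurrogate_middle_eq {c μ r : ℝ} (hμ : 0 ≤ μ) :
    2 * c * |r| * √(μ * (μ + 1)) - μ * (c ^ 2 + r ^ 2) =
      2 * √(μ + 1) * √μ * |r| * c - √μ ^ 2 * (|r| ^ 2 + c ^ 2) := by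
  rw [Real.sqrt_mul hμ, Real.sq_sqrt hμ, sq_abs]
  ring

lemma sqrt_add_one_sq_eq {μ : ℝ} (hμ : 0 ≤ μ) : √(μ + 1) ^ 2 = √μ ^ 2 + 1 := by
  rw [Real.sq_sqrt hμ, Real.sq_sqrt (by linarith)]

section Surrogate

variable {c μ r : ℝ}

lemma gncSurrogate_le_min (hμ : 0 < μ) : gncSurrogate c μ r ≤ min (r ^ 2) (c ^ 2) := by
  unfold gncSurrogate
  split_ifs with hinner hmiddle
  · refine le_min le_rfl (hinner.trans (mul_le_of_le_one_left (sq_nonneg c) ?_))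
    exact div_le_one_of_le₀ (by linarith) (by linarith)
  · have hpq := sqrt_add_one_sq_eq hμ.le
    rw [gncSurrogate_middle_eq hμ.le]
    refine le_min ?_ ?_
    · simpa only [sq_abs] using transition_le_sq (a := |r|) (c := c) hpq
    · simpa only [mul_right_comm _ |r| c, add_comm (|r| ^ 2)] using
        transition_le_sq (a := c) (c := |r|) hpq
  · refine le_min ((le_mul_of_one_le_left (sq_nonneg c) ?_).trans (not_le.1 hmiddle).le) le_rfl
    exact (one_le_div hμ).2 (by linarith)

lemma gncSurrogate_nonneg (hc : 0 ≤ c) (hμ : 0 < μ) : 0 ≤ gncSurrogate c μ r := by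
  unfold gncSurrogate
  split_ifs with hinner hmiddle
  · positivity
  · rw [div_mul_eq_mul_div, not_le, div_lt_iff₀ (by linarith)] at hinner
    rw [div_mul_eq_mul_div, le_div_iff₀ hμ] at hmiddle
    have hupp := (mul_sq_le_mul_sq_iff (r := r) (c := c) hμ.le (by linarith : 0 ≤ μ + 1)).1
      (by linarith)
    have hlow := (mul_sq_le_mul_sq_iff (r := c) (c := r) hμ.le (by linarith : 0 ≤ μ + 1)).1
      (by linarith)
    rw [abs_of_nonneg hc] at hupp hlow
    rw [gncSurrogate_middle_eq hμ.le]
    exact transition_nonneg (sqrt_add_one_sq_eq hμ.le) (Real.sqrt_nonneg _)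
      (Real.sqrt_nonneg _) hc hupp hlow
  · positivity

lemma tendsto_gncSurrogate (hr : r ^ 2 ≠ c ^ 2) :
    Tendsto (fun μ => gncSurrogate c μ r) atTop (𝓝 (min (r ^ 2) (c ^ 2))) := by
  have hinner := tendsto_div_add_one_atTop.mul_const (c ^ 2)
  have houter := tendsto_add_one_div_self_atTop.mul_const (c ^ 2)
  rw [one_mul] at hinner houter
  rcases hr.lt_or_gt with hlt | hgt
  · rw [min_eq_left hlt.le]
    refine tendsto_const_nhds.congr' ?_
    filter_upwards [hinner.eventually_const_lt hlt] with μ hμ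
    rw [gncSurrogate, if_pos hμ.le]
  · rw [min_eq_right hgt.le]
    refine tendsto_const_nhds.congr' ?_
    filter_upwards [hinner.eventually_lt_const hgt, houter.eventually_lt_const hgt] with μ h₁ h₂
    rw [gncSurrogate, if_neg h₁.not_ge, if_neg h₂.not_ge]

end Surrogate

/-- The GNC-TLS surrogate satisfies `0 ≤ ρ_μ(r) ≤ min(r², c̄²)` and converges
pointwise (for `r² ≠ c̄²`) to the TLS cost `min(r², c̄²)` as `μ → ∞`. -/
theorem gnc_tls_surrogate_bounds_limit (c : ℝ) (hc : 0 < c) :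
    let ρμ : ℝ → ℝ → ℝ := fun μ r =>
      if r ^ 2 ≤ μ / (μ + 1) * c ^ 2 then r ^ 2
      else if r ^ 2 ≤ (μ + 1) / μ * c ^ 2 then
        2 * c * |r| * Real.sqrt (μ * (μ + 1)) - μ * (c ^ 2 + r ^ 2)
      else c ^ 2
    (∀ μ r : ℝ, 0 < μ → 0 ≤ ρμ μ r ∧ ρμ μ r ≤ min (r ^ 2) (c ^ 2)) ∧
    (∀ r : ℝ, r ^ 2 ≠ c ^ 2 →
      Filter.Tendsto (fun μ => ρμ μ r) Filter.atTop (nhds (min (r ^ 2) (c ^ 2)))) :=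
  ⟨fun _ _ hμ => ⟨gncSurrogate_nonneg hc.le hμ, gncSurrogate_le_min hμ⟩,
    fun _ hr => tendsto_gncSurrogate hr⟩
end

section
/- The minimum over w ∈ [0,1] of the GNC-TLS outlier process objective equals the surrogate cost: for all r ≥ 0, min_{w∈[0,1]} [w·r² + μ(1−w)c̄²/(μ+w)] = ρ_μ(r), where ρ_μ is the GNC-TLS surrogate. -/
/-!
Substituting `t = μ + w` turns the outlier-process objective into
`t r² + (c √(μ(μ+1)))² / t − μ(c² + r²)` on `t ∈ [μ, μ + 1]`. The map `t ↦ t a² + b² / t`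
is bounded below by `2ab` (AM–GM), with equality at `t = b / a`; when `b / a` lies outside
`[p, q]` the minimum is attained at the nearer endpoint. The three regimes of `ρ_μ` are the
three positions of `b / a = c √(μ(μ+1)) / r` relative to `[μ, μ + 1]`.
-/

open Set

section MulSqAddSqDiv

variable {a b p q t : ℝ}

theorem two_mul_le_mul_sq_add_sq_div (ht : 0 < t) (a b : ℝ) :
    2 * a * b ≤ t * a ^ 2 + b ^ 2 / t := by
  have h : t * a ^ 2 + b ^ 2 / t - 2 * a * b = (t * a - b) ^ 2 / t := by
    field_simp
    ring
  exact sub_nonneg.1 (h ▸ by positivity)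

theorem div_mul_sq_add_sq_div_div (ha : a ≠ 0) (b : ℝ) :
    b / a * a ^ 2 + b ^ 2 / (b / a) = 2 * a * b := by
  rcases eq_or_ne b 0 with rfl | hb
  · simp
  · field_simp
    ring

theorem mul_sq_add_sq_div_le_of_le_right (ha : 0 ≤ a) (ht : 0 < t) (htq : t ≤ q)
    (hqb : q * a ≤ b) : q * a ^ 2 + b ^ 2 / q ≤ t * a ^ 2 + b ^ 2 / t := by
  have hq : 0 < q := ht.trans_le htq
  have h : t * a ^ 2 + b ^ 2 / t - (q * a ^ 2 + b ^ 2 / q)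
      = (q - t) * (b ^ 2 - t * q * a ^ 2) / (t * q) := by
    field_simp
    ring
  have hsq : t * q * a ^ 2 ≤ b ^ 2 := by
    nlinarith [mul_le_mul_of_nonneg_right htq (mul_nonneg hq.le (sq_nonneg a)),
      mul_self_le_mul_self (mul_nonneg hq.le ha) hqb]
  exact sub_nonneg.1 (h ▸ div_nonneg (mul_nonneg (by linarith) (by linarith)) (by positivity))

theorem mul_sq_add_sq_div_le_of_le_left (hb : 0 ≤ b) (hp : 0 < p) (hpt : p ≤ t)
    (hbp : b ≤ p * a) : p * a ^ 2 + b ^ 2 / p ≤ t * a ^ 2 + b ^ 2 / t := by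
  have ht : 0 < t := hp.trans_le hpt
  have h : t * a ^ 2 + b ^ 2 / t - (p * a ^ 2 + b ^ 2 / p)
      = (t - p) * (t * p * a ^ 2 - b ^ 2) / (t * p) := by
    field_simp
    ring
  have hsq : b ^ 2 ≤ t * p * a ^ 2 := by
    nlinarith [mul_le_mul_of_nonneg_right hpt (mul_nonneg hp.le (sq_nonneg a)),
      mul_self_le_mul_self hb hbp]
  exact sub_nonneg.1 (h ▸ div_nonneg (mul_nonneg (by linarith) (by linarith)) (by positivity))

theorem isLeast_image_Icc_mul_sq_add_sq_div (ha : 0 ≤ a) (hb : 0 ≤ b) (hp : 0 < p)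
    (hpq : p ≤ q) :
    IsLeast ((fun t => t * a ^ 2 + b ^ 2 / t) '' Icc p q)
      (if q * a ≤ b then q * a ^ 2 + b ^ 2 / q
       else if p * a ≤ b then 2 * a * b
       else p * a ^ 2 + b ^ 2 / p) := by
  have hpos : ∀ t ∈ Icc p q, 0 < t := fun t ht => hp.trans_le ht.1
  split_ifs with hqb hpb
  · exact ⟨mem_image_of_mem _ ⟨hpq, le_rfl⟩, forall_mem_image.2 fun t ht =>
      mul_sq_add_sq_div_le_of_le_right ha (hpos t ht) ht.2 hqb⟩
  · have ha' : 0 < a := by nlinarith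
    refine ⟨⟨b / a, ⟨(le_div_iff₀ ha').2 hpb, (div_le_iff₀ ha').2 (by linarith)⟩,
      div_mul_sq_add_sq_div_div ha'.ne' b⟩, forall_mem_image.2 fun t ht =>
        two_mul_le_mul_sq_add_sq_div (hpos t ht) a b⟩
  · exact ⟨mem_image_of_mem _ ⟨le_rfl, hpq⟩, forall_mem_image.2 fun t ht =>
      mul_sq_add_sq_div_le_of_le_left hb hp ht.1 (by linarith)⟩

end MulSqAddSqDiv

theorem mul_le_mul_sqrt_mul_iff {k l c r : ℝ} (hk : 0 < k) (hl : 0 ≤ l) (hc : 0 ≤ c)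
    (hr : 0 ≤ r) : k * r ≤ c * √(k * l) ↔ r ^ 2 ≤ l / k * c ^ 2 := by
  rw [← pow_le_pow_iff_left₀ (by positivity) (by positivity) two_ne_zero, mul_pow, mul_pow,
    Real.sq_sqrt (by positivity), div_mul_eq_mul_div, le_div_iff₀ hk]
  constructor <;> intro h <;> nlinarith

theorem tls_objective_eq {μ c r w : ℝ} (hw : μ + w ≠ 0) :
    w * r ^ 2 + μ * (1 - w) * c ^ 2 / (μ + w)
      = (μ + w) * r ^ 2 + c ^ 2 * (μ * (μ + 1)) / (μ + w) - μ * (c ^ 2 + r ^ 2) := by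
  field_simp
  ring

/-- Black-Rangarajan duality for the TLS surrogate: the minimum over `w ∈ [0,1]`
of the outlier-process objective equals the GNC-TLS surrogate cost. -/
theorem gnc_tls_black_rangarajan (c μ : ℝ) (hc : 0 < c) (hμ : 0 < μ) :
    ∀ r : ℝ, 0 ≤ r →
      IsLeast ((fun w : ℝ => w * r ^ 2 + μ * (1 - w) * c ^ 2 / (μ + w)) ''
          Set.Icc (0 : ℝ) 1)
        (if r ^ 2 ≤ μ / (μ + 1) * c ^ 2 then r ^ 2
         else if r ^ 2 ≤ (μ + 1) / μ * c ^ 2 then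
           2 * c * r * Real.sqrt (μ * (μ + 1)) - μ * (c ^ 2 + r ^ 2)
         else c ^ 2) := by
  intro r hr
  set s := √(μ * (μ + 1))
  have hb : (c * s) ^ 2 = c ^ 2 * (μ * (μ + 1)) := by
    rw [mul_pow, Real.sq_sqrt (by positivity)]
  have hobj : EqOn (fun w : ℝ => w * r ^ 2 + μ * (1 - w) * c ^ 2 / (μ + w))
      ((fun x => x - μ * (c ^ 2 + r ^ 2)) ∘ (fun t => t * r ^ 2 + (c * s) ^ 2 / t) ∘
        (fun w => μ + w)) (Icc 0 1) := fun w hw => by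
    rw [Function.comp_apply, Function.comp_apply, hb]
    exact tls_objective_eq (by linarith [hw.1])
  have hupper : (μ + 1) * r ≤ c * s ↔ r ^ 2 ≤ μ / (μ + 1) * c ^ 2 := by
    have h := mul_le_mul_sqrt_mul_iff (k := μ + 1) (by linarith) hμ.le hc.le hr
    rwa [mul_comm (μ + 1) μ] at h
  have hlower : μ * r ≤ c * s ↔ r ^ 2 ≤ (μ + 1) / μ * c ^ 2 :=
    mul_le_mul_sqrt_mul_iff hμ (by linarith) hc.le hr
  have hleast := Monotone.map_isLeast (f := fun x => x - μ * (c ^ 2 + r ^ 2))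
    (fun _ _ h => sub_le_sub_right h _)
    (isLeast_image_Icc_mul_sq_add_sq_div (b := c * s) hr (by positivity) hμ
      (le_add_of_nonneg_right zero_le_one))
  rw [hobj.image_eq, image_comp, image_comp, image_const_add_Icc, add_zero]
  simp only [hupper, hlower] at hleast
  refine (congrArg (IsLeast _) ?_).mp hleast
  rw [hb]
  split_ifs <;> field_simp <;> ring
end

section
/- The minimum over w ∈ [0,1] of the GNC-GM outlier process objective equals the GM surrogate cost: for all r ∈ ℝ, min_{w∈[0,1]} [w·r² + μc̄²(√w − 1)²] = μc̄²r²/(μc̄² + r²). -/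
/-!
Put `a = μ c̄² ≥ 0`, `s = r² ≥ 0` and `t = √w`. Completing the square in `t` gives
`(a + s) (t² s + a (t - 1)²) = a s + ((a + s) t - a)²`, so the objective is at least
`a s / (a + s)`, with equality at `t = a / (a + s)`, i.e. at the Black-Rangarajan weight
`w* = (a / (a + s))² ∈ [0, 1]`.
-/

namespace GemanMcClure

variable {a s : ℝ}

theorem mul_objective_eq_add_sq (a s t : ℝ) :
    (a + s) * (t ^ 2 * s + a * (t - 1) ^ 2) = a * s + ((a + s) * t - a) ^ 2 := by
  ring

theorem surrogate_le_objective (ha : 0 ≤ a) (hs : 0 ≤ s) {w : ℝ} (hw : 0 ≤ w) :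
    a * s / (a + s) ≤ w * s + a * (Real.sqrt w - 1) ^ 2 := by
  have key := mul_objective_eq_add_sq a s (Real.sqrt w)
  rw [Real.sq_sqrt hw] at key
  refine div_le_of_le_mul₀ (by positivity) (by positivity) ?_
  linarith [sq_nonneg ((a + s) * Real.sqrt w - a)]

theorem optimalWeight_mem_Icc (ha : 0 ≤ a) (hs : 0 ≤ s) :
    (a / (a + s)) ^ 2 ∈ Set.Icc (0 : ℝ) 1 :=
  ⟨sq_nonneg _, pow_le_one₀ (by positivity) (div_le_one_of_le₀ (by linarith) (by positivity))⟩

theorem objective_optimalWeight (ha : 0 ≤ a) (hs : 0 ≤ s) :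
    (a / (a + s)) ^ 2 * s + a * (Real.sqrt ((a / (a + s)) ^ 2) - 1) ^ 2 = a * s / (a + s) := by
  rw [Real.sqrt_sq (by positivity)]
  rcases (add_nonneg ha hs).eq_or_lt with hzero | hpos
  · -- the degenerate case `a = s = 0`, where `x / 0 = 0` makes both sides vanish
    obtain ⟨rfl, rfl⟩ : a = 0 ∧ s = 0 := ⟨by linarith, by linarith⟩
    simp
  · rw [eq_div_iff hpos.ne', mul_comm, mul_objective_eq_add_sq, mul_div_cancel₀ _ hpos.ne']
    ring

theorem isLeast_objective (ha : 0 ≤ a) (hs : 0 ≤ s) :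
    IsLeast ((fun w : ℝ => w * s + a * (Real.sqrt w - 1) ^ 2) '' Set.Icc 0 1)
      (a * s / (a + s)) := by
  refine ⟨⟨_, optimalWeight_mem_Icc ha hs, objective_optimalWeight ha hs⟩, ?_⟩
  rintro _ ⟨w, hw, rfl⟩
  exact surrogate_le_objective ha hs hw.1

end GemanMcClure

theorem gnc_gm_black_rangarajan_general (c μ : ℝ) (hμ : 0 < μ) :
    ∀ r : ℝ,
      IsLeast ((fun w : ℝ => w * r ^ 2 + μ * c ^ 2 * (Real.sqrt w - 1) ^ 2) ''
          Set.Icc (0 : ℝ) 1)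
        (μ * c ^ 2 * r ^ 2 / (μ * c ^ 2 + r ^ 2)) :=
  fun r => GemanMcClure.isLeast_objective (by positivity) (sq_nonneg r)

/-- Black-Rangarajan duality for the Geman-McClure surrogate: the minimum over
`w ∈ [0,1]` of the outlier-process objective equals `μ c̄² r²/(μ c̄² + r²)`. -/
theorem gnc_gm_black_rangarajan (c μ : ℝ) (hc : 0 < c) (hμ : 0 < μ) :
    ∀ r : ℝ,
      IsLeast ((fun w : ℝ => w * r ^ 2 + μ * c ^ 2 * (Real.sqrt w - 1) ^ 2) ''
          Set.Icc (0 : ℝ) 1)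
        (μ * c ^ 2 * r ^ 2 / (μ * c ^ 2 + r ^ 2)) :=
  gnc_gm_black_rangarajan_general c μ hμ
end
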